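/- arXiv:1207.0201 — 4 statements merged into one kernel-verified Lean document; each statement's English description precedes it below -/
import Mathlib

section
/- Let n ≥ 1, s ≥ 0, q ∈ [2,∞), and A, B > 0. Let K, Φ : ℝ^n × ℝ^n → ℂ be measurable and suppose that for every t ∈ [0, s+n] one has sup_{x ∈ ℝ^n} ∫_{ℝ^n} |K(x,y)|² (1+|x−y|)^{2t} dy ≤ A² and sup_{z ∈ ℝ^n} ∫_{ℝ^n} |Φ(y,z)|² (1+|y−z|)^{2t} dy ≤ B². Define H(x,z) = ∫_{ℝ^n} K(x,y) Φ(y,z) dy. Then there is a constant C depending only on n such that sup_{x ∈ ℝ^n} ∫_{ℝ^n} |H(x,z)|^q (1+|x−z|)^{sq} dz ≤ C (A B)^q. -/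
open MeasureTheory ENNReal

/-!
With `t = s + n`, Peetre's inequality `(1+|x−z|)^t ≤ (1+|x−y|)^t (1+|y−z|)^t` and Cauchy–Schwarz
in `y` give the pointwise decay `|H(x,z)| (1+|x−z|)^{s+n} ≤ AB`. Raising it to the power `q ≥ 2`
leaves `|H(x,z)|^q (1+|x−z|)^{sq} ≤ (AB)^q (1+|x−z|)^{-2n}`, and `(1+|u|)^{-2n}` is integrable
on `ℝ^n`, so `C = ∫ (1+|u|)^{-2n} du` (plus one, to make it positive) works.
-/

lemma one_add_norm_sub_rpow_le_mul {E : Type*} [SeminormedAddCommGroup E] {t : ℝ} (ht : 0 ≤ t)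
    (x y z : E) : (1 + ‖x - z‖) ^ t ≤ (1 + ‖x - y‖) ^ t * (1 + ‖y - z‖) ^ t := by
  rw [← Real.mul_rpow (by positivity) (by positivity)]
  refine Real.rpow_le_rpow (by positivity) ?_ ht
  nlinarith [norm_sub_le_norm_sub_add_norm_sub x y z, norm_nonneg (x - y), norm_nonneg (y - z)]

lemma ENNReal.ofReal_rpow_two_mul {r : ℝ} (hr : 0 ≤ r) (t : ℝ) :
    ENNReal.ofReal (r ^ (2 * t)) = ENNReal.ofReal (r ^ t) ^ 2 := by
  rw [← ENNReal.ofReal_pow (by positivity), mul_comm, Real.rpow_mul hr, Real.rpow_two]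

lemma ENNReal.lintegral_mul_le_of_lintegral_sq_le {α : Type*} [MeasurableSpace α] {μ : Measure α}
    {f g : α → ℝ≥0∞} {a b : ℝ≥0∞} (hf : AEMeasurable f μ) (hg : AEMeasurable g μ)
    (hfa : ∫⁻ x, f x ^ 2 ∂μ ≤ a ^ 2) (hgb : ∫⁻ x, g x ^ 2 ∂μ ≤ b ^ 2) :
    ∫⁻ x, f x * g x ∂μ ≤ a * b := by
  have hsqrt : ∀ c : ℝ≥0∞, (c ^ 2) ^ (1 / 2 : ℝ) = c := fun c => by
    simpa using ENNReal.pow_rpow_inv_natCast (x := c) two_ne_zero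
  calc ∫⁻ x, f x * g x ∂μ
      ≤ (∫⁻ x, f x ^ 2 ∂μ) ^ (1 / 2 : ℝ) * (∫⁻ x, g x ^ 2 ∂μ) ^ (1 / 2 : ℝ) := by
        simpa only [ENNReal.rpow_two, Pi.mul_apply] using
          ENNReal.lintegral_mul_le_Lp_mul_Lq μ Real.HolderConjugate.two_two hf hg
    _ ≤ (a ^ 2) ^ (1 / 2 : ℝ) * (b ^ 2) ^ (1 / 2 : ℝ) := by gcongr
    _ = a * b := by rw [hsqrt, hsqrt]

theorem enorm_integral_mul_mul_weight_le {E 𝕜 : Type*} [NormedAddCommGroup E] [MeasurableSpace E]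
    [OpensMeasurableSpace E] {μ : Measure E} [RCLike 𝕜] {k φ : E → 𝕜}
    (hk : AEMeasurable k μ) (hφ : AEMeasurable φ μ) {t : ℝ} (ht : 0 ≤ t) {a b : ℝ≥0∞} {x z : E}
    (hka : ∫⁻ y, ‖k y‖ₑ ^ 2 * ENNReal.ofReal ((1 + ‖x - y‖) ^ (2 * t)) ∂μ ≤ a ^ 2)
    (hφb : ∫⁻ y, ‖φ y‖ₑ ^ 2 * ENNReal.ofReal ((1 + ‖y - z‖) ^ (2 * t)) ∂μ ≤ b ^ 2) :
    ‖∫ y, k y * φ y ∂μ‖ₑ * ENNReal.ofReal ((1 + ‖x - z‖) ^ t) ≤ a * b := by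
  calc ‖∫ y, k y * φ y ∂μ‖ₑ * ENNReal.ofReal ((1 + ‖x - z‖) ^ t)
      ≤ (∫⁻ y, ‖k y‖ₑ * ‖φ y‖ₑ ∂μ) * ENNReal.ofReal ((1 + ‖x - z‖) ^ t) := by
        gcongr
        simpa only [enorm_mul] using enorm_integral_le_lintegral_enorm (fun y => k y * φ y)
    _ = ∫⁻ y, ‖k y‖ₑ * ‖φ y‖ₑ * ENNReal.ofReal ((1 + ‖x - z‖) ^ t) ∂μ :=
        (lintegral_mul_const' _ _ ofReal_ne_top).symm
    _ ≤ ∫⁻ y, (‖k y‖ₑ * ENNReal.ofReal ((1 + ‖x - y‖) ^ t)) *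
          (‖φ y‖ₑ * ENNReal.ofReal ((1 + ‖y - z‖) ^ t)) ∂μ := lintegral_mono fun y => by
        rw [mul_mul_mul_comm, ← ENNReal.ofReal_mul (by positivity)]
        gcongr
        exact one_add_norm_sub_rpow_le_mul ht x y z
    _ ≤ a * b := by
        refine ENNReal.lintegral_mul_le_of_lintegral_sq_le
          (hk.enorm.mul (Measurable.aemeasurable ?_)) (hφ.enorm.mul (Measurable.aemeasurable ?_))
          ?_ ?_
        · exact (continuous_const.sub continuous_id).norm.measurable.const_add 1 |>.pow_const t
            |>.ennreal_ofReal
        · exact (continuous_id.sub continuous_const).norm.measurable.const_add 1 |>.pow_const t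
            |>.ennreal_ofReal
        · convert hka using 3 with y
          rw [mul_pow, ENNReal.ofReal_rpow_two_mul (by positivity)]
        · convert hφb using 3 with y
          rw [mul_pow, ENNReal.ofReal_rpow_two_mul (by positivity)]

lemma lintegral_ofReal_one_add_norm_sub_rpow {E : Type*} [NormedAddCommGroup E] [MeasurableSpace E]
    [MeasurableAdd E] {μ : Measure E} [μ.IsAddRightInvariant] (x : E) (r : ℝ) :
    ∫⁻ z, ENNReal.ofReal ((1 + ‖x - z‖) ^ r) ∂μ = ∫⁻ u, ENNReal.ofReal ((1 + ‖u‖) ^ r) ∂μ := by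
  simp_rw [norm_sub_rev x]
  exact lintegral_sub_right_eq_self (fun u => ENNReal.ofReal ((1 + ‖u‖) ^ r)) x

lemma ENNReal.rpow_mul_ofReal_rpow_le {e M : ℝ≥0∞} {r s ρ q : ℝ} (hr : 1 ≤ r) (hρ : 0 ≤ ρ)
    (hq : 2 ≤ q) (h : e * ENNReal.ofReal (r ^ (s + ρ)) ≤ M) :
    e ^ q * ENNReal.ofReal (r ^ (s * q)) ≤ M ^ q * ENNReal.ofReal (r ^ (-(2 * ρ))) := by
  have hr0 : 0 < r := by linarith
  have hq0 : 0 ≤ q := by linarith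
  have hsplit : e ^ q * ENNReal.ofReal (r ^ (s * q)) =
      (e * ENNReal.ofReal (r ^ (s + ρ))) ^ q * ENNReal.ofReal (r ^ (-(ρ * q))) := by
    rw [ENNReal.mul_rpow_of_nonneg _ _ hq0, ENNReal.ofReal_rpow_of_nonneg (by positivity) hq0,
      ← Real.rpow_mul hr0.le, mul_assoc, ← ENNReal.ofReal_mul (by positivity),
      ← Real.rpow_add hr0]
    ring_nf
  rw [hsplit]
  exact mul_le_mul' (ENNReal.rpow_le_rpow h hq0)
    (ENNReal.ofReal_le_ofReal (Real.rpow_le_rpow_of_exponent_le hr (by nlinarith)))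

/-- Weighted `L^q` bound for a composed kernel: if `K` and `Φ` satisfy the
weighted `L²` bounds `sup_x ∫ |K(x,y)|²(1+|x−y|)^{2t} dy ≤ A²` and
`sup_z ∫ |Φ(y,z)|²(1+|y−z|)^{2t} dy ≤ B²` for all `t ∈ [0, s+n]`, then the composed kernel
`H(x,z) = ∫ K(x,y)Φ(y,z) dy` satisfies
`sup_x ∫ |H(x,z)|^q (1+|x−z|)^{sq} dz ≤ C (AB)^q` for every `q ≥ 2`, with `C = C(n)`. -/
theorem stmt1 (n : ℕ) (hn : 1 ≤ n) :
    ∃ C : ℝ, 0 < C ∧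
      ∀ (s : ℝ), 0 ≤ s → ∀ (q : ℝ), 2 ≤ q → ∀ (A B : ℝ), 0 < A → 0 < B →
        ∀ (K Φ : EuclideanSpace ℝ (Fin n) × EuclideanSpace ℝ (Fin n) → ℂ),
          Measurable K → Measurable Φ →
          (∀ t : ℝ, 0 ≤ t → t ≤ s + n → ∀ x,
            ∫⁻ y, (‖K (x, y)‖₊ : ℝ≥0∞) ^ 2 * ENNReal.ofReal ((1 + ‖x - y‖) ^ (2 * t)) ≤
              ENNReal.ofReal (A ^ 2)) →
          (∀ t : ℝ, 0 ≤ t → t ≤ s + n → ∀ z,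
            ∫⁻ y, (‖Φ (y, z)‖₊ : ℝ≥0∞) ^ 2 * ENNReal.ofReal ((1 + ‖y - z‖) ^ (2 * t)) ≤
              ENNReal.ofReal (B ^ 2)) →
          ∀ x, ∫⁻ z, (‖∫ y, K (x, y) * Φ (y, z)‖₊ : ℝ≥0∞) ^ q *
                ENNReal.ofReal ((1 + ‖x - z‖) ^ (s * q)) ≤
              ENNReal.ofReal (C * (A * B) ^ q) := by
  set I := ∫⁻ u : EuclideanSpace ℝ (Fin n), ENNReal.ofReal ((1 + ‖u‖) ^ (-(2 * (n : ℝ))))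
  have hI : I ≠ ∞ := (finite_integral_one_add_norm <| by
    rw [finrank_euclideanSpace_fin]; norm_cast; omega).ne
  refine ⟨I.toReal + 1, by positivity, fun s hs q hq A B hA hB K Φ hKm hΦm hK hΦ x => ?_⟩
  have hdecay : ∀ z, ‖∫ y, K (x, y) * Φ (y, z)‖ₑ * ENNReal.ofReal ((1 + ‖x - z‖) ^ (s + n)) ≤
      ENNReal.ofReal (A * B) := fun z => by
    rw [ENNReal.ofReal_mul hA.le]
    refine enorm_integral_mul_mul_weight_le (hKm.comp measurable_prodMk_left).aemeasurable
      (hΦm.comp measurable_prodMk_right).aemeasurable (by positivity) ?_ ?_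
    · rw [← ENNReal.ofReal_pow hA.le]; exact hK _ (by positivity) le_rfl x
    · rw [← ENNReal.ofReal_pow hB.le]; exact hΦ _ (by positivity) le_rfl z
  calc ∫⁻ z, (‖∫ y, K (x, y) * Φ (y, z)‖₊ : ℝ≥0∞) ^ q * ENNReal.ofReal ((1 + ‖x - z‖) ^ (s * q))
      ≤ ∫⁻ z, ENNReal.ofReal (A * B) ^ q * ENNReal.ofReal ((1 + ‖x - z‖) ^ (-(2 * (n : ℝ)))) :=
        lintegral_mono fun z => ENNReal.rpow_mul_ofReal_rpow_le (by simp) (by positivity) hq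
          (hdecay z)
    _ = ENNReal.ofReal ((A * B) ^ q) * I := by
        rw [ENNReal.ofReal_rpow_of_pos (by positivity), lintegral_const_mul' _ _ ofReal_ne_top,
          lintegral_ofReal_one_add_norm_sub_rpow]
    _ ≤ ENNReal.ofReal ((I.toReal + 1) * (A * B) ^ q) := by
        rw [mul_comm (I.toReal + 1), ENNReal.ofReal_mul (by positivity),
          ENNReal.ofReal_add ENNReal.toReal_nonneg zero_le_one, ENNReal.ofReal_toReal hI]
        gcongr
        exact le_self_add
end

section
/- Let n ≥ 1, let r ∈ (1,2], let q = r/(r−1) be its conjugate exponent, and let s > n/r. Let H : ℝ^n × ℝ^n → ℂ be measurable with sup_{x ∈ ℝ^n} ∫_{ℝ^n} |H(x,y)|^q (1+|x−y|)^{sq} dy ≤ A^q for some A > 0. Then there is a constant C depending only on n, r, s such that for every j ∈ ℤ, every f ∈ L^r(ℝ^n), and every x ∈ ℝ^n with M(|f|^r)(x) < ∞, the function y ↦ 2^{jn} H(2^j x, 2^j y) f(y) is integrable and |∫_{ℝ^n} 2^{jn} H(2^j x, 2^j y) f(y) dy| ≤ C · A · (M(|f|^r)(x))^{1/r}. -/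
/-!
Write `c = 2 ^ j`. Hölder's inequality with the weight `w y = (1 + c |x - y|) ^ s` splits
`c ^ n ∫ |H (c x, c y)| |f y| dy` into two factors. The change of variables `z = c y` turns
`∫ (|H (c x, c y)| w y) ^ q dy` into `c ^ (-n)` times the hypothesis, at most `c ^ (-n) A ^ q`. For
the other factor, `(1 + c |x - y|) ^ (-s r)` is dominated by the dyadic sum
`∑ₘ 2 ^ (-s r m) 1_{B(x, 2 ^ (m + 1) / c)}(y)`, and each ball integral of `|f| ^ r` is at most the
volume of the ball times `M(|f| ^ r)(x)`; this gives `c ^ (-n)` times a geometric series with ratio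
`2 ^ (n - s r) < 1`. The powers of `c` cancel because `1 / q + 1 / r = 1`.
-/

open MeasureTheory ENNReal

/-- The (uncentered-radius, centered) Hardy–Littlewood maximal function
`M g (x) = sup_{R>0} |B(x,R)|⁻¹ ∫_{B(x,R)} |g|`. -/
noncomputable def maximalFn (n : ℕ) (g : EuclideanSpace ℝ (Fin n) → ℝ)
    (x : EuclideanSpace ℝ (Fin n)) : ℝ≥0∞ :=
  ⨆ (R : ℝ) (_ : 0 < R),
    (volume (Metric.ball x R))⁻¹ * ∫⁻ y in Metric.ball x R, ENNReal.ofReal |g y|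

open Metric Module

theorem lintegral_mul_le_Lp_mul_Lq_of_weight {α : Type*} [MeasurableSpace α] (μ : Measure α)
    {p q : ℝ} (hpq : p.HolderConjugate q) {f g w : α → ℝ≥0∞} (hf : AEMeasurable f μ)
    (hg : AEMeasurable g μ) (hw : AEMeasurable w μ) (hw0 : ∀ a, w a ≠ 0) (hwt : ∀ a, w a ≠ ∞) :
    ∫⁻ a, f a * g a ∂μ ≤
      (∫⁻ a, (f a * w a) ^ p ∂μ) ^ (1 / p) * (∫⁻ a, (g a * (w a)⁻¹) ^ q ∂μ) ^ (1 / q) :=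
  calc ∫⁻ a, f a * g a ∂μ = ∫⁻ a, ((fun a => f a * w a) * fun a => g a * (w a)⁻¹) a ∂μ :=
        lintegral_congr fun a => by
          rw [Pi.mul_apply, mul_mul_mul_comm, ENNReal.mul_inv_cancel (hw0 a) (hwt a), mul_one]
    _ ≤ _ := lintegral_mul_le_Lp_mul_Lq μ hpq (hf.mul hw) (hg.mul hw.inv)

theorem ENNReal.mul_mul_inv_mul_rpow_mul_inv_mul_rpow {p q : ℝ} (hpq : p.HolderConjugate q)
    {e : ℝ≥0∞} (he0 : e ≠ 0) (het : e ≠ ∞) (a b : ℝ≥0∞) :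
    e * ((e⁻¹ * a) ^ (1 / p) * (e⁻¹ * b) ^ (1 / q)) = a ^ (1 / p) * b ^ (1 / q) := by
  have hcancel : e * (e⁻¹ ^ (1 / p) * e⁻¹ ^ (1 / q)) = 1 := by
    rw [← ENNReal.rpow_add _ _ (ENNReal.inv_ne_zero.2 het) (ENNReal.inv_ne_top.2 he0),
      hpq.one_div_add_one_div, div_one, ENNReal.rpow_one, ENNReal.mul_inv_cancel he0 het]
  rw [ENNReal.mul_rpow_of_nonneg _ _ hpq.one_div_nonneg,
    ENNReal.mul_rpow_of_nonneg _ _ hpq.symm.one_div_nonneg]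
  calc _ = e * (e⁻¹ ^ (1 / p) * e⁻¹ ^ (1 / q)) * (a ^ (1 / p) * b ^ (1 / q)) := by ring
    _ = _ := by rw [hcancel, one_mul]

theorem lintegral_comp_smul {E : Type*} [NormedAddCommGroup E] [NormedSpace ℝ E]
    [MeasurableSpace E] [BorelSpace E] [FiniteDimensional ℝ E] (μ : Measure E)
    [μ.IsAddHaarMeasure] (f : E → ℝ≥0∞) {c : ℝ} (hc : c ≠ 0) :
    ∫⁻ y, f (c • y) ∂μ = ENNReal.ofReal |(c ^ finrank ℝ E)⁻¹| * ∫⁻ y, f y ∂μ := by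
  rw [← smul_eq_mul, ← lintegral_smul_measure, ← Measure.map_addHaar_smul μ hc,
    ← MeasurableEquiv.coe_smul₀ (α := E) hc, lintegral_map_equiv]
  rfl

theorem ofReal_one_add_mul_dist_rpow_neg_le_tsum {X : Type*} [PseudoMetricSpace X] (x y : X)
    {c t : ℝ} (hc : 0 < c) (ht : 0 ≤ t) :
    ENNReal.ofReal ((1 + c * dist y x) ^ (-t)) ≤
      ∑' m : ℕ, (ball x (2 ^ (m + 1) / c)).indicator
        (fun _ => ENNReal.ofReal (((2 : ℝ) ^ (-t)) ^ m)) y := by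
  have hd : 0 ≤ c * dist y x := by positivity
  obtain ⟨m, hm_le, hm_lt⟩ :=
    exists_nat_pow_near (by linarith : 1 ≤ 1 + c * dist y x) (one_lt_two : (1 : ℝ) < 2)
  have hy : y ∈ ball x (2 ^ (m + 1) / c) := by
    rw [mem_ball, lt_div_iff₀ hc]
    linarith
  refine le_trans ?_ (ENNReal.le_tsum m)
  rw [Set.indicator_of_mem hy]
  refine ENNReal.ofReal_le_ofReal ?_
  calc (1 + c * dist y x) ^ (-t) ≤ ((2 : ℝ) ^ m) ^ (-t) :=
        Real.rpow_le_rpow_of_nonpos (by positivity) hm_le (by linarith)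
    _ = ((2 : ℝ) ^ (-t)) ^ m := (Real.rpow_pow_comm (by norm_num) _ _).symm

theorem lintegral_ball_le_maximalFn {n : ℕ} (g : EuclideanSpace ℝ (Fin n) → ℝ)
    (x : EuclideanSpace ℝ (Fin n)) {R : ℝ} (hR : 0 < R) :
    ∫⁻ y in ball x R, ENNReal.ofReal |g y| ≤
      ENNReal.ofReal (R ^ n * volume.real (ball (0 : EuclideanSpace ℝ (Fin n)) 1)) *
        maximalFn n g x := by
  have hvol : volume (ball x R) =
      ENNReal.ofReal (R ^ n * volume.real (ball (0 : EuclideanSpace ℝ (Fin n)) 1)) := by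
    rw [Measure.addHaar_ball_of_pos _ _ hR, finrank_euclideanSpace_fin,
      ENNReal.ofReal_mul (by positivity), ofReal_measureReal]
  rw [← hvol, ← ENNReal.inv_mul_le_iff (measure_ball_pos volume x hR).ne' measure_ball_lt_top.ne]
  exact le_iSup₂ (f := fun R (_ : 0 < R) =>
    (volume (ball x R))⁻¹ * ∫⁻ y in ball x R, ENNReal.ofReal |g y|) R hR

-- The sum over `m` of `|B(0, 2 ^ (m + 1))| * 2 ^ (-t * m)`.
noncomputable def decayConst (n : ℕ) (t : ℝ) : ℝ :=
  volume.real (ball (0 : EuclideanSpace ℝ (Fin n)) 1) * 2 ^ n * (1 - 2 ^ n * 2 ^ (-t))⁻¹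

theorem two_pow_mul_two_rpow_neg_lt_one {n : ℕ} {t : ℝ} (ht : (n : ℝ) < t) :
    (2 : ℝ) ^ n * 2 ^ (-t) < 1 := by
  rw [← Real.rpow_natCast, ← Real.rpow_add two_pos]
  exact Real.rpow_lt_one_of_one_lt_of_neg one_lt_two (by linarith)

theorem decayConst_pos {n : ℕ} {t : ℝ} (ht : (n : ℝ) < t) : 0 < decayConst n t := by
  have hV : 0 < volume.real (ball (0 : EuclideanSpace ℝ (Fin n)) 1) :=
    ENNReal.toReal_pos (measure_ball_pos volume _ one_pos).ne' measure_ball_lt_top.ne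
  have := sub_pos.2 (two_pow_mul_two_rpow_neg_lt_one ht)
  unfold decayConst
  positivity

theorem lintegral_mul_decay_le_maximalFn {n : ℕ} {t c : ℝ} (ht : (n : ℝ) < t) (hc : 0 < c)
    {g : EuclideanSpace ℝ (Fin n) → ℝ} (hg : AEMeasurable g) (x : EuclideanSpace ℝ (Fin n)) :
    ∫⁻ y, ENNReal.ofReal |g y| * ENNReal.ofReal ((1 + c * dist y x) ^ (-t)) ≤
      ENNReal.ofReal (decayConst n t / c ^ n) * maximalFn n g x := by
  set V := volume.real (ball (0 : EuclideanSpace ℝ (Fin n)) 1) with hV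
  set ρ : ℝ := 2 ^ n * 2 ^ (-t) with hρ
  have hρ0 : 0 ≤ ρ := by positivity
  have hρ1 : ρ < 1 := two_pow_mul_two_rpow_neg_lt_one ht
  set M := maximalFn n g x
  set B : ℕ → Set (EuclideanSpace ℝ (Fin n)) := fun m => ball x (2 ^ (m + 1) / c)
  set a : ℕ → ℝ≥0∞ := fun m => ENNReal.ofReal (((2 : ℝ) ^ (-t)) ^ m)
  have hterm : ∀ m : ℕ, ∫⁻ y, (B m).indicator (fun y => a m * ENNReal.ofReal |g y|) y ≤
      ENNReal.ofReal (V * 2 ^ n / c ^ n * ρ ^ m) * M := by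
    intro m
    rw [lintegral_indicator measurableSet_ball, lintegral_const_mul' _ _ ofReal_ne_top]
    calc _ ≤ a m * (ENNReal.ofReal ((2 ^ (m + 1) / c) ^ n * V) * M) := by
          gcongr
          exact lintegral_ball_le_maximalFn g x (by positivity)
      _ = _ := by
          rw [← mul_assoc, ← ENNReal.ofReal_mul (by positivity)]
          congr 2
          ring
  calc ∫⁻ y, ENNReal.ofReal |g y| * ENNReal.ofReal ((1 + c * dist y x) ^ (-t))
      ≤ ∫⁻ y, ∑' m, (B m).indicator (fun y => a m * ENNReal.ofReal |g y|) y := by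
        refine lintegral_mono fun y => ?_
        calc _ ≤ ENNReal.ofReal |g y| * ∑' m, (B m).indicator (fun _ => a m) y := by
              gcongr
              exact ofReal_one_add_mul_dist_rpow_neg_le_tsum x y hc (by linarith)
          _ = _ := by
              rw [← ENNReal.tsum_mul_left]
              congr 1 with m
              rw [Set.indicator_mul_left, mul_comm]
    _ = ∑' m, ∫⁻ y, (B m).indicator (fun y => a m * ENNReal.ofReal |g y|) y :=
        lintegral_tsum fun m =>
          (aemeasurable_const.mul hg.abs.ennreal_ofReal).indicator measurableSet_ball
    _ ≤ ∑' m, ENNReal.ofReal (V * 2 ^ n / c ^ n * ρ ^ m) * M := ENNReal.tsum_le_tsum hterm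
    _ = ENNReal.ofReal (decayConst n t / c ^ n) * M := by
        rw [ENNReal.tsum_mul_right, ← ENNReal.ofReal_tsum_of_nonneg (fun m => by positivity)
          ((summable_geometric_of_lt_one hρ0 hρ1).mul_left _), tsum_mul_left,
          tsum_geometric_of_lt_one hρ0 hρ1, decayConst, ← hρ, ← hV]
        congr 2
        ring

theorem lintegral_rescaled_kernel_weight_rpow {E F : Type*} [NormedAddCommGroup E]
    [NormedSpace ℝ E] [MeasurableSpace E] [BorelSpace E] [FiniteDimensional ℝ E] (μ : Measure E)
    [μ.IsAddHaarMeasure] [NormedAddCommGroup F] (H : E × E → F) {c q : ℝ} (hc : 0 < c)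
    (hq : 0 ≤ q) (s : ℝ) (x : E) :
    ∫⁻ y, (‖H (c • x, c • y)‖ₑ * ENNReal.ofReal ((1 + c * dist y x) ^ s)) ^ q ∂μ =
      (ENNReal.ofReal (c ^ finrank ℝ E))⁻¹ *
        ∫⁻ z, (‖H (c • x, z)‖₊ : ℝ≥0∞) ^ q * ENNReal.ofReal ((1 + ‖c • x - z‖) ^ (s * q)) ∂μ := by
  have hdist : ∀ y, ‖c • x - c • y‖ = c * dist y x := fun y => by
    rw [← smul_sub, norm_smul, Real.norm_of_nonneg hc.le, dist_comm, dist_eq_norm]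
  rw [← ENNReal.ofReal_inv_of_pos (by positivity),
    ← abs_of_pos (by positivity : 0 < (c ^ finrank ℝ E)⁻¹), ← lintegral_comp_smul μ _ hc.ne']
  refine lintegral_congr fun y => ?_
  rw [ENNReal.mul_rpow_of_nonneg _ _ hq, ENNReal.ofReal_rpow_of_nonneg (by positivity) hq,
    ← Real.rpow_mul (by positivity), hdist, enorm_eq_nnnorm]

theorem lintegral_mul_inv_weight_rpow_le_maximalFn {n : ℕ} {r s c : ℝ} (hr : 0 < r)
    (hsr : (n : ℝ) < s * r) (hc : 0 < c) {G : Type*} [NormedAddCommGroup G]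
    {f : EuclideanSpace ℝ (Fin n) → G} (hf : AEStronglyMeasurable f)
    (x : EuclideanSpace ℝ (Fin n)) :
    ∫⁻ y, (‖f y‖ₑ * (ENNReal.ofReal ((1 + c * dist y x) ^ s))⁻¹) ^ r ≤
      (ENNReal.ofReal (c ^ n))⁻¹ *
        (ENNReal.ofReal (decayConst n (s * r)) * maximalFn n (fun y => ‖f y‖ ^ r) x) :=
  calc ∫⁻ y, (‖f y‖ₑ * (ENNReal.ofReal ((1 + c * dist y x) ^ s))⁻¹) ^ r
      = ∫⁻ y, ENNReal.ofReal |‖f y‖ ^ r| *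
          ENNReal.ofReal ((1 + c * dist y x) ^ (-(s * r))) := lintegral_congr fun y => by
        rw [ENNReal.mul_rpow_of_nonneg _ _ hr.le, ← ENNReal.ofReal_inv_of_pos (by positivity),
          ← ofReal_norm, ENNReal.ofReal_rpow_of_nonneg (norm_nonneg _) hr.le,
          ENNReal.ofReal_rpow_of_nonneg (by positivity) hr.le, abs_of_nonneg (by positivity),
          ← Real.rpow_neg (by positivity), ← Real.rpow_mul (by positivity), neg_mul]
    _ ≤ ENNReal.ofReal (decayConst n (s * r) / c ^ n) * maximalFn n (fun y => ‖f y‖ ^ r) x :=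
        lintegral_mul_decay_le_maximalFn hsr hc (hf.norm.aemeasurable.pow_const r) x
    _ = _ := by
        rw [div_eq_inv_mul, ENNReal.ofReal_mul (by positivity),
          ENNReal.ofReal_inv_of_pos (by positivity), mul_assoc]

theorem lintegral_rescaled_kernel_mul_le_maximalFn {n : ℕ} {r q s : ℝ}
    (hqr : q.HolderConjugate r) (hsr : (n : ℝ) < s * r) {F G : Type*} [NormedAddCommGroup F]
    [MeasurableSpace F] [OpensMeasurableSpace F] [NormedAddCommGroup G]
    {H : EuclideanSpace ℝ (Fin n) × EuclideanSpace ℝ (Fin n) → F} (hH : Measurable H)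
    {A : ℝ} (hA : 0 ≤ A)
    (hHA : ∀ x, ∫⁻ y, (‖H (x, y)‖₊ : ℝ≥0∞) ^ q * ENNReal.ofReal ((1 + ‖x - y‖) ^ (s * q)) ≤
      ENNReal.ofReal (A ^ q))
    {c : ℝ} (hc : 0 < c) {f : EuclideanSpace ℝ (Fin n) → G} (hf : AEStronglyMeasurable f)
    (x : EuclideanSpace ℝ (Fin n)) :
    ENNReal.ofReal (c ^ n) * ∫⁻ y, ‖H (c • x, c • y)‖ₑ * ‖f y‖ₑ ≤
      ENNReal.ofReal (decayConst n (s * r) ^ (1 / r) * A) *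
        maximalFn n (fun y => ‖f y‖ ^ r) x ^ (1 / r) := by
  have hq := hqr.pos
  have hr := hqr.symm.pos
  set C := decayConst n (s * r)
  have hC : 0 < C := decayConst_pos hsr
  set M := maximalFn n (fun y => ‖f y‖ ^ r) x
  set e := ENNReal.ofReal (c ^ n)
  have he0 : e ≠ 0 := by positivity
  set w : EuclideanSpace ℝ (Fin n) → ℝ≥0∞ := fun y => ENNReal.ofReal ((1 + c * dist y x) ^ s)
  have hw : Measurable w := by fun_prop
  have hkernel : ∫⁻ y, (‖H (c • x, c • y)‖ₑ * w y) ^ q ≤ e⁻¹ * ENNReal.ofReal (A ^ q) := by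
    rw [lintegral_rescaled_kernel_weight_rpow volume H hc hq.le s x, finrank_euclideanSpace_fin]
    gcongr
    exact hHA (c • x)
  have hmax : ∫⁻ y, (‖f y‖ₑ * (w y)⁻¹) ^ r ≤ e⁻¹ * (ENNReal.ofReal C * M) :=
    lintegral_mul_inv_weight_rpow_le_maximalFn hr hsr hc hf x
  calc e * ∫⁻ y, ‖H (c • x, c • y)‖ₑ * ‖f y‖ₑ
      ≤ e * ((∫⁻ y, (‖H (c • x, c • y)‖ₑ * w y) ^ q) ^ (1 / q) *
          (∫⁻ y, (‖f y‖ₑ * (w y)⁻¹) ^ r) ^ (1 / r)) := by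
        gcongr
        exact lintegral_mul_le_Lp_mul_Lq_of_weight volume hqr
          (by fun_prop) hf.enorm hw.aemeasurable (fun y => by positivity) fun _ => ofReal_ne_top
    _ ≤ e * ((e⁻¹ * ENNReal.ofReal (A ^ q)) ^ (1 / q) *
          (e⁻¹ * (ENNReal.ofReal C * M)) ^ (1 / r)) := by gcongr
    _ = ENNReal.ofReal (A ^ q) ^ (1 / q) * (ENNReal.ofReal C * M) ^ (1 / r) :=
        ENNReal.mul_mul_inv_mul_rpow_mul_inv_mul_rpow hqr he0 ofReal_ne_top _ _
    _ = ENNReal.ofReal (C ^ (1 / r) * A) * M ^ (1 / r) := by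
        rw [ENNReal.ofReal_rpow_of_nonneg (by positivity) hqr.one_div_nonneg,
          ← Real.rpow_mul hA, mul_one_div_cancel hqr.ne_zero, Real.rpow_one,
          ENNReal.mul_rpow_of_nonneg _ _ hqr.symm.one_div_nonneg,
          ENNReal.ofReal_rpow_of_nonneg hC.le hqr.symm.one_div_nonneg,
          ENNReal.ofReal_mul (by positivity)]
        ring

theorem stmt3_general (n : ℕ) (r : ℝ) (hr1 : 1 < r)
    (q : ℝ) (hq : q = r / (r - 1)) (s : ℝ) (hs : (n : ℝ) / r < s) :
    ∃ C : ℝ, 0 < C ∧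
      ∀ (H : EuclideanSpace ℝ (Fin n) × EuclideanSpace ℝ (Fin n) → ℂ),
        Measurable H → ∀ A : ℝ, 0 < A →
        (∀ x, ∫⁻ y, (‖H (x, y)‖₊ : ℝ≥0∞) ^ q * ENNReal.ofReal ((1 + ‖x - y‖) ^ (s * q)) ≤
            ENNReal.ofReal (A ^ q)) →
        ∀ (j : ℤ) (f : EuclideanSpace ℝ (Fin n) → ℂ),
          MemLp f (ENNReal.ofReal r) volume →
          ∀ x, maximalFn n (fun y => ‖f y‖ ^ r) x < ⊤ →
            Integrable (fun y =>
                (2 : ℂ) ^ (j * (n : ℤ)) * H ((2 : ℝ) ^ j • x, (2 : ℝ) ^ j • y) * f y) ∧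
            ENNReal.ofReal
                ‖∫ y, (2 : ℂ) ^ (j * (n : ℤ)) * H ((2 : ℝ) ^ j • x, (2 : ℝ) ^ j • y) * f y‖ ≤
              ENNReal.ofReal (C * A) *
                (maximalFn n (fun y => ‖f y‖ ^ r) x) ^ (1 / r) := by
  have hqr : q.HolderConjugate r :=
    ((Real.holderConjugate_iff_eq_conjExponent hr1).mpr hq).symm
  have hsr : (n : ℝ) < s * r := (div_lt_iff₀ (by linarith)).1 hs
  set C := decayConst n (s * r) ^ (1 / r)
  refine ⟨C, Real.rpow_pos_of_pos (decayConst_pos hsr) _, fun H hH A hA hHA j f hf x hMx => ?_⟩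
  have hscale : ‖(2 : ℂ) ^ (j * (n : ℤ))‖ₑ = ENNReal.ofReal (((2 : ℝ) ^ j) ^ n) := by
    rw [← ofReal_norm, norm_zpow, Complex.norm_two, zpow_mul, zpow_natCast]
  have hlint : ∫⁻ y, ‖(2 : ℂ) ^ (j * (n : ℤ)) * H ((2 : ℝ) ^ j • x, (2 : ℝ) ^ j • y) * f y‖ₑ ≤
      ENNReal.ofReal (C * A) * maximalFn n (fun y => ‖f y‖ ^ r) x ^ (1 / r) := by
    simp only [enorm_mul, hscale, mul_assoc]
    rw [lintegral_const_mul' _ _ ofReal_ne_top]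
    exact lintegral_rescaled_kernel_mul_le_maximalFn hqr hsr hH hA.le hHA (zpow_pos two_pos j)
      hf.1 x
  have hkernel : Measurable fun y : EuclideanSpace ℝ (Fin n) =>
      (2 : ℂ) ^ (j * (n : ℤ)) * H ((2 : ℝ) ^ j • x, (2 : ℝ) ^ j • y) := by fun_prop
  refine ⟨⟨hkernel.aestronglyMeasurable.mul hf.1, hlint.trans_lt ?_⟩, ?_⟩
  · exact mul_lt_top ofReal_lt_top (rpow_lt_top_of_nonneg (by positivity) hMx.ne)
  · rw [ofReal_norm]
    exact (enorm_integral_le_lintegral_enorm _).trans hlint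

/-- If `sup_x ∫ |H(x,y)|^q (1+|x−y|)^{sq} dy ≤ A^q` with `q = r/(r−1)`,
`r ∈ (1,2]`, `s > n/r`, then for all `j ∈ ℤ`, `f ∈ L^r`, and `x` with `M(|f|^r)(x) < ∞`,
the function `y ↦ 2^{jn} H(2^j x, 2^j y) f(y)` is integrable and
`|∫ 2^{jn} H(2^j x, 2^j y) f(y) dy| ≤ C A (M(|f|^r)(x))^{1/r}` with `C = C(n,r,s)`. -/
theorem stmt3 (n : ℕ) (hn : 1 ≤ n) (r : ℝ) (hr1 : 1 < r) (hr2 : r ≤ 2)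
    (q : ℝ) (hq : q = r / (r - 1)) (s : ℝ) (hs : (n : ℝ) / r < s) :
    ∃ C : ℝ, 0 < C ∧
      ∀ (H : EuclideanSpace ℝ (Fin n) × EuclideanSpace ℝ (Fin n) → ℂ),
        Measurable H → ∀ A : ℝ, 0 < A →
        (∀ x, ∫⁻ y, (‖H (x, y)‖₊ : ℝ≥0∞) ^ q * ENNReal.ofReal ((1 + ‖x - y‖) ^ (s * q)) ≤
            ENNReal.ofReal (A ^ q)) →
        ∀ (j : ℤ) (f : EuclideanSpace ℝ (Fin n) → ℂ),
          MemLp f (ENNReal.ofReal r) volume →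
          ∀ x, maximalFn n (fun y => ‖f y‖ ^ r) x < ⊤ →
            Integrable (fun y =>
                (2 : ℂ) ^ (j * (n : ℤ)) * H ((2 : ℝ) ^ j • x, (2 : ℝ) ^ j • y) * f y) ∧
            ENNReal.ofReal
                ‖∫ y, (2 : ℂ) ^ (j * (n : ℤ)) * H ((2 : ℝ) ^ j • x, (2 : ℝ) ^ j • y) * f y‖ ≤
              ENNReal.ofReal (C * A) *
                (maximalFn n (fun y => ‖f y‖ ^ r) x) ^ (1 / r) :=
  stmt3_general n r hr1 q hq s hs
end

section
/- Let τ : ℝ → ℂ be continuously differentiable with both τ and τ′ square integrable. Then ∑_{k ∈ ℤ} ( sup_{r ∈ [k,k+1]} |τ(r)|² ) ≤ ∫_ℝ |τ(r)|² dr + 2 (∫_ℝ |τ(r)|² dr)^{1/2} (∫_ℝ |τ′(r)|² dr)^{1/2}. -/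
/-!
On an interval of length `L`, the fundamental theorem of calculus bounds the oscillation of a
`C¹` function `f` by `∫ |f'|`, so `L * f r ≤ ∫ f + L * ∫ |f'|` at every point `r`. For
`f = ‖τ‖²` one has `|f'| = 2 |⟪τ, τ'⟫| ≤ 2 ‖τ‖ ‖τ'‖`; summing over the unit intervals
`[k, k + 1]` turns the right-hand sides into `∫ ‖τ‖² + 2 ∫ ‖τ‖ ‖τ'‖`, and Cauchy–Schwarz
finishes.
-/

open MeasureTheory ENNReal Set

theorem abs_sub_le_integral_abs_deriv {f f' : ℝ → ℝ} {a b r s : ℝ}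
    (hf : ∀ x ∈ Icc a b, HasDerivAt f (f' x) x) (hf' : IntervalIntegrable f' volume a b)
    (hr : r ∈ Icc a b) (hs : s ∈ Icc a b) :
    |f r - f s| ≤ ∫ x in a..b, |f' x| := by
  have hab : a ≤ b := hr.1.trans hr.2
  have hsub : uIcc s r ⊆ uIcc a b := uIcc_subset_uIcc (Icc_subset_uIcc hs) (Icc_subset_uIcc hr)
  rw [← intervalIntegral.integral_eq_sub_of_hasDerivAt
    (fun x hx => hf x (uIcc_of_le hab ▸ hsub hx)) (hf'.mono_set hsub)]
  calc |∫ x in s..r, f' x| ≤ |∫ x in s..r, (|f' x|)| :=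
        intervalIntegral.norm_integral_le_abs_integral_norm (f := f')
    _ ≤ |∫ x in a..b, (|f' x|)| := intervalIntegral.abs_integral_mono_interval
        (uIoc_subset_uIoc_of_uIcc_subset_uIcc hsub) (ae_of_all _ fun _ => abs_nonneg _) hf'.abs
    _ = ∫ x in a..b, |f' x| :=
        abs_of_nonneg (intervalIntegral.integral_nonneg hab fun _ _ => abs_nonneg _)

theorem mul_le_integral_add_mul_integral_abs_deriv {f f' : ℝ → ℝ} {a b r : ℝ}
    (hf : ∀ x ∈ Icc a b, HasDerivAt f (f' x) x) (hf' : IntervalIntegrable f' volume a b)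
    (hr : r ∈ Icc a b) :
    (b - a) * f r ≤ (∫ x in a..b, f x) + (b - a) * ∫ x in a..b, |f' x| := by
  have hab : a ≤ b := hr.1.trans hr.2
  have hcont : ContinuousOn f (uIcc a b) := fun x hx =>
    (hf x (uIcc_of_le hab ▸ hx)).continuousAt.continuousWithinAt
  have hmono := intervalIntegral.integral_mono_on hab (intervalIntegrable_const (μ := volume))
    hcont.intervalIntegrable fun s hs =>
      sub_le_comm.1 ((le_abs_self _).trans (abs_sub_le_integral_abs_deriv hf hf' hr hs))
  rw [intervalIntegral.integral_const, smul_eq_mul, mul_sub] at hmono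
  linarith

theorem mul_sq_norm_le_integral {E : Type*} [NormedAddCommGroup E] [InnerProductSpace ℝ E]
    {τ τ' : ℝ → E} {a b r : ℝ}
    (hτ : ∀ x ∈ Icc a b, HasDerivAt τ (τ' x) x) (hτ' : ContinuousOn τ' (Icc a b))
    (hr : r ∈ Icc a b) :
    (b - a) * ‖τ r‖ ^ 2 ≤
      (∫ x in a..b, ‖τ x‖ ^ 2) + (b - a) * ∫ x in a..b, 2 * ‖τ x‖ * ‖τ' x‖ := by
  have hab : a ≤ b := hr.1.trans hr.2
  have hcont : ContinuousOn τ (Icc a b) := fun x hx =>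
    (hτ x hx).continuousAt.continuousWithinAt
  have hinner : ContinuousOn (fun x => 2 * inner ℝ (τ x) (τ' x)) (Icc a b) :=
    continuousOn_const.mul (hcont.inner hτ')
  have hprod : ContinuousOn (fun x => 2 * ‖τ x‖ * ‖τ' x‖) (Icc a b) :=
    (continuousOn_const.mul hcont.norm).mul hτ'.norm
  refine (mul_le_integral_add_mul_integral_abs_deriv (fun x hx => (hτ x hx).norm_sq)
    (hinner.intervalIntegrable_of_Icc hab) hr).trans ?_
  gcongr
  refine intervalIntegral.integral_mono_on hab (hinner.abs.intervalIntegrable_of_Icc hab)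
    (hprod.intervalIntegrable_of_Icc hab) fun x _ => ?_
  rw [abs_mul, abs_two, mul_assoc]
  gcongr
  exact abs_real_inner_le_norm _ _

theorem tsum_setLIntegral_Ioc_intCast (μ : Measure ℝ) (f : ℝ → ℝ≥0∞) :
    ∑' k : ℤ, ∫⁻ x in Ioc (k : ℝ) (k + 1), f x ∂μ = ∫⁻ x, f x ∂μ := by
  rw [← lintegral_iUnion (fun _ => measurableSet_Ioc) (pairwise_disjoint_Ioc_intCast ℝ),
    iUnion_Ioc_intCast, Measure.restrict_univ]

theorem integral_norm_mul_norm_le_sqrt_mul_sqrt {α F : Type*} [MeasurableSpace α]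
    {μ : Measure α} [NormedAddCommGroup F] {f g : α → F} (hf : MemLp f 2 μ) (hg : MemLp g 2 μ) :
    ∫ a, ‖f a‖ * ‖g a‖ ∂μ ≤ √(∫ a, ‖f a‖ ^ 2 ∂μ) * √(∫ a, ‖g a‖ ^ 2 ∂μ) := by
  simpa [Real.sqrt_eq_rpow] using integral_mul_norm_le_Lp_mul_Lq Real.HolderConjugate.two_two
    (by simpa using hf) (by simpa using hg)

/-- For `τ : ℝ → ℂ` continuously differentiable with `τ, τ′ ∈ L²`,
`∑_{k∈ℤ} sup_{r∈[k,k+1]} |τ(r)|² ≤ ∫|τ|² + 2 (∫|τ|²)^{1/2} (∫|τ′|²)^{1/2}`. -/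
theorem stmt4 (τ : ℝ → ℂ) (hτ : ContDiff ℝ 1 τ)
    (h2 : Integrable (fun r => ‖τ r‖ ^ 2))
    (h2' : Integrable (fun r => ‖deriv τ r‖ ^ 2)) :
    (∑' k : ℤ, ⨆ r ∈ Set.Icc (k : ℝ) (k + 1), ENNReal.ofReal (‖τ r‖ ^ 2)) ≤
      ENNReal.ofReal ((∫ r, ‖τ r‖ ^ 2) +
        2 * Real.sqrt (∫ r, ‖τ r‖ ^ 2) * Real.sqrt (∫ r, ‖deriv τ r‖ ^ 2)) := by
  have hτ' : Continuous (deriv τ) := hτ.continuous_deriv le_rfl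
  have hL2 : MemLp τ 2 volume :=
    (memLp_two_iff_integrable_sq_norm hτ.continuous.aestronglyMeasurable).2 h2
  have hL2' : MemLp (deriv τ) 2 volume :=
    (memLp_two_iff_integrable_sq_norm hτ'.aestronglyMeasurable).2 h2'
  set F : ℝ → ℝ := fun x => ‖τ x‖ ^ 2 + 2 * ‖τ x‖ * ‖deriv τ x‖ with hF
  have hF0 : ∀ x, 0 ≤ F x := fun x => by positivity
  have hcross : Integrable fun x => 2 * ‖τ x‖ * ‖deriv τ x‖ := by
    simpa only [mul_assoc, Pi.mul_apply] using (hL2.norm.integrable_mul hL2'.norm).const_mul 2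
  have hFi : Integrable F := h2.add hcross
  have hsup (k : ℤ) : ⨆ r ∈ Icc (k : ℝ) (k + 1), ENNReal.ofReal (‖τ r‖ ^ 2) ≤
      ∫⁻ x in Ioc (k : ℝ) (k + 1), ENNReal.ofReal (F x) := by
    refine iSup₂_le fun r hr => ?_
    have h := mul_sq_norm_le_integral (fun x _ => (hτ.differentiable one_ne_zero x).hasDerivAt)
      hτ'.continuousOn hr
    rw [add_sub_cancel_left, one_mul, one_mul, ← intervalIntegral.integral_add
      ((by fun_prop : Continuous _).intervalIntegrable _ _)
      ((by fun_prop : Continuous _).intervalIntegrable _ _),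
      intervalIntegral.integral_of_le (by linarith)] at h
    rw [← ofReal_integral_eq_lintegral_ofReal hFi.integrableOn (ae_of_all _ hF0)]
    exact ofReal_le_ofReal h
  calc _ ≤ ∑' k : ℤ, ∫⁻ x in Ioc (k : ℝ) (k + 1), ENNReal.ofReal (F x) := ENNReal.tsum_le_tsum hsup
    _ = ENNReal.ofReal ((∫ x, ‖τ x‖ ^ 2) + 2 * ∫ x, ‖τ x‖ * ‖deriv τ x‖) := by
      rw [tsum_setLIntegral_Ioc_intCast, ← ofReal_integral_eq_lintegral_ofReal hFi
        (ae_of_all _ hF0), hF, integral_add h2 hcross, ← integral_const_mul]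
      simp only [mul_assoc]
    _ ≤ _ := by
      rw [mul_assoc 2]
      gcongr
      exact integral_norm_mul_norm_le_sqrt_mul_sqrt hL2 hL2'
end

section
/- Let (X, μ) be a measure space, p ∈ (0,∞), N a positive integer, and c, C₀, A, B > 0. Let u_1,…,u_N, s_1,…,s_N, v_1,…,v_N and g be nonnegative measurable functions on X satisfying: (i) for every 1 ≤ i ≤ N, every λ > 0 and every ε ∈ (0,1/2), μ({u_i > 2λ} ∩ {s_i ≤ ελ}) ≤ C₀ exp(−c/ε²) μ({v_i > λ}); (ii) s_i(x) ≤ A g(x) for all x and all i; (iii) ∫_X v_i^p dμ ≤ B^p for all i and ∫_X g^p dμ ≤ B^p. Then there exists a constant C depending only on p, c, C₀ and A (but not on N, μ, or the functions) such that ∫_X (max_{1 ≤ i ≤ N} u_i)^p dμ ≤ C^p (log(N+1))^{p/2} B^p. -/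
/-!
Split `{max_i u_i > t}` into the sets `{u_i > t, s_i ≤ ε t / 2}`, controlled by the good-λ
inequality, and `{g > ε t / (2A)}`. Integrating against `p t^(p-1) dt` (layer cake) gives
`∫ (max_i u_i)^p ≤ N C₀ exp(-c/ε²) 2^p B^p + (2A/ε)^p B^p`. With `ε² = c / (L + 4c)`,
`L = log (N + 1)`, the Gaussian factor `exp(-c/ε²) ≤ 1/(N+1)` absorbs the union bound over
`N` operators, while `ε⁻² = L/c + 4 = O(L)` costs only `L^(p/2)`.
-/

open MeasureTheory ENNReal Set

section LayerCake

variable {X : Type*} [MeasurableSpace X] (μ : Measure X) {p : ℝ}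

theorem lintegral_ofReal_rpow_eq_lintegral_meas_lt_mul {f : X → ℝ} (hf0 : 0 ≤ᵐ[μ] f)
    (hf : AEMeasurable f μ) (hp : 0 < p) :
    ∫⁻ x, ENNReal.ofReal (f x) ^ p ∂μ =
      ENNReal.ofReal p * ∫⁻ t in Ioi 0, μ {x | t < f x} * ENNReal.ofReal (t ^ (p - 1)) := by
  rw [← lintegral_rpow_eq_lintegral_meas_lt_mul μ hf0 hf hp]
  refine lintegral_congr_ae ?_
  filter_upwards [hf0] with x hx
  exact ENNReal.ofReal_rpow_of_nonneg hx hp.le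

theorem lintegral_ofReal_rpow_le_of_meas_lt_le {ι : Type*} [Fintype ι] {f : X → ℝ}
    {F : ι → X → ℝ} (K : ι → ℝ≥0∞) (hf0 : 0 ≤ᵐ[μ] f) (hf : AEMeasurable f μ)
    (hF0 : ∀ i, 0 ≤ᵐ[μ] F i) (hF : ∀ i, AEMeasurable (F i) μ) (hp : 0 < p)
    (htail : ∀ t > 0, μ {x | t < f x} ≤ ∑ i, K i * μ {x | t < F i x}) :
    ∫⁻ x, ENNReal.ofReal (f x) ^ p ∂μ ≤ ∑ i, K i * ∫⁻ x, ENNReal.ofReal (F i x) ^ p ∂μ := by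
  have hdist : ∀ i, Measurable fun t : ℝ => μ {x | t < F i x} := fun i =>
    Antitone.measurable fun t₁ t₂ h => measure_mono fun x hx => h.trans_lt hx
  have hweight : Measurable fun t : ℝ => ENNReal.ofReal (t ^ (p - 1)) := by fun_prop
  have hlayer i := lintegral_ofReal_rpow_eq_lintegral_meas_lt_mul μ (hF0 i) (hF i) hp
  simp_rw [lintegral_ofReal_rpow_eq_lintegral_meas_lt_mul μ hf0 hf hp, hlayer]
  calc ENNReal.ofReal p * ∫⁻ t in Ioi 0, μ {x | t < f x} * ENNReal.ofReal (t ^ (p - 1))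
      ≤ ENNReal.ofReal p *
          ∫⁻ t in Ioi 0, ∑ i, K i * (μ {x | t < F i x} * ENNReal.ofReal (t ^ (p - 1))) := by
        gcongr ENNReal.ofReal p * ?_
        refine setLIntegral_mono' measurableSet_Ioi fun t ht => ?_
        simp_rw [← mul_assoc, ← Finset.sum_mul]
        exact mul_le_mul_left (htail t ht) _
    _ = ∑ i, K i * (ENNReal.ofReal p *
          ∫⁻ t in Ioi 0, μ {x | t < F i x} * ENNReal.ofReal (t ^ (p - 1))) := by
        have hmeas i : Measurable fun t => μ {x | t < F i x} * ENNReal.ofReal (t ^ (p - 1)) :=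
          (hdist i).mul hweight
        rw [lintegral_finsetSum _ fun i _ => (hmeas i).const_mul _, Finset.mul_sum]
        refine Finset.sum_congr rfl fun i _ => ?_
        rw [lintegral_const_mul _ (hmeas i), mul_left_comm]

theorem lintegral_ofReal_const_mul_rpow {a : ℝ} (ha : 0 ≤ a) (hp : 0 ≤ p) (f : X → ℝ) :
    ∫⁻ x, ENNReal.ofReal (a * f x) ^ p ∂μ =
      ENNReal.ofReal a ^ p * ∫⁻ x, ENNReal.ofReal (f x) ^ p ∂μ := by
  simp_rw [ENNReal.ofReal_mul ha, ENNReal.mul_rpow_of_nonneg _ _ hp]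
  exact lintegral_const_mul' _ _ (ENNReal.rpow_ne_top_of_nonneg hp ENNReal.ofReal_ne_top)

end LayerCake

section GoodLambda

variable {X ι : Type*} [MeasurableSpace X] {μ : Measure X} [Fintype ι] [Nonempty ι]
  {u s v : ι → X → ℝ} {g : X → ℝ} {A ε p : ℝ} {K : ℝ≥0∞}

theorem meas_lt_iSup_le_of_goodLambda (hε : 0 < ε)
    (hgood : ∀ i lam, 0 < lam →
      μ ({x | 2 * lam < u i x} ∩ {x | s i x ≤ ε * lam}) ≤ K * μ {x | lam < v i x})
    (hsg : ∀ i x, s i x ≤ A * g x) {t : ℝ} (ht : 0 < t) :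
    μ {x | t < ⨆ i, u i x} ≤
      ∑ i, K * μ {x | t < 2 * v i x} + μ {x | t < 2 * A / ε * g x} := by
  have hcover : {x | t < ⨆ i, u i x} ⊆ (⋃ i, {x | 2 * (t / 2) < u i x} ∩
      {x | s i x ≤ ε * (t / 2)}) ∪ {x | t < 2 * A / ε * g x} := by
    intro x hx
    obtain ⟨i, hi⟩ := (lt_ciSup_iff (Set.finite_range fun i => u i x).bddAbove).mp hx
    by_cases hsi : s i x ≤ ε * (t / 2)
    · exact Or.inl (mem_iUnion.mpr ⟨i, show 2 * (t / 2) < u i x by linarith, hsi⟩)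
    · refine Or.inr ?_
      have : ε * t < 2 * (A * g x) := by linarith [hsg i x, not_le.mp hsi]
      simp only [mem_ofPred_eq]
      rw [div_mul_eq_mul_div, lt_div_iff₀ hε]
      linarith
  have hhalf i : {x | t / 2 < v i x} = {x | t < 2 * v i x} := by
    ext x; simp only [mem_ofPred_eq]; constructor <;> intro h <;> linarith
  calc μ {x | t < ⨆ i, u i x}
      ≤ ∑ i, μ ({x | 2 * (t / 2) < u i x} ∩ {x | s i x ≤ ε * (t / 2)}) +
          μ {x | t < 2 * A / ε * g x} :=
        (measure_mono hcover).trans ((measure_union_le _ _).trans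
          (add_le_add_left (measure_iUnion_fintype_le _ _) _))
    _ ≤ _ := by
        gcongr with i
        simpa only [hhalf] using hgood i (t / 2) (by positivity)

theorem lintegral_iSup_rpow_le_of_goodLambda (hp : 0 < p) (hA : 0 ≤ A) (hε : 0 < ε)
    (hu : ∀ i, Measurable (u i)) (hv : ∀ i, Measurable (v i)) (hg : Measurable g)
    (hu0 : ∀ i x, 0 ≤ u i x) (hv0 : ∀ i x, 0 ≤ v i x) (hg0 : ∀ x, 0 ≤ g x)
    (hgood : ∀ i lam, 0 < lam →
      μ ({x | 2 * lam < u i x} ∩ {x | s i x ≤ ε * lam}) ≤ K * μ {x | lam < v i x})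
    (hsg : ∀ i x, s i x ≤ A * g x) :
    ∫⁻ x, ENNReal.ofReal (⨆ i, u i x) ^ p ∂μ ≤
      ∑ i, K * (ENNReal.ofReal 2 ^ p * ∫⁻ x, ENNReal.ofReal (v i x) ^ p ∂μ) +
        ENNReal.ofReal (2 * A / ε) ^ p * ∫⁻ x, ENNReal.ofReal (g x) ^ p ∂μ := by
  have hD : 0 ≤ 2 * A / ε := by positivity
  let F : Option ι → X → ℝ := fun o => o.elim (fun x => 2 * A / ε * g x) fun i x => 2 * v i x
  have hF0 o : 0 ≤ᵐ[μ] F o := ae_of_all _ fun x => by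
    cases o
    · exact mul_nonneg hD (hg0 x)
    · exact mul_nonneg zero_le_two (hv0 _ x)
  have hF o : AEMeasurable (F o) μ := by
    cases o
    · exact (hg.const_mul _).aemeasurable
    · exact ((hv _).const_mul _).aemeasurable
  have hsup0 : 0 ≤ᵐ[μ] fun x => ⨆ i, u i x :=
    ae_of_all _ fun x => Real.iSup_nonneg fun i => hu0 i x
  have key := lintegral_ofReal_rpow_le_of_meas_lt_le μ (fun o => o.elim 1 fun _ => K) hsup0
    (Measurable.iSup hu).aemeasurable hF0 hF hp fun t ht => by
      simpa only [Fintype.sum_option, F, Option.elim, one_mul, add_comm] using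
        meas_lt_iSup_le_of_goodLambda hε hgood hsg ht
  simp only [Fintype.sum_option, F, Option.elim, one_mul,
    lintegral_ofReal_const_mul_rpow μ hD hp.le,
    lintegral_ofReal_const_mul_rpow μ zero_le_two hp.le] at key
  rwa [add_comm] at key

end GoodLambda

section Constants

/-- The paper's `ε_N`, for `L = log (N + 1)`. -/
noncomputable def goodLambdaEps (c L : ℝ) : ℝ := Real.sqrt (c / (L + 4 * c))

noncomputable def goodLambdaConst (p c C₀ A : ℝ) : ℝ :=
  (C₀ * 2 ^ p + (2 * A) ^ p) ^ (1 / p) * Real.sqrt (1 / c + 4 / Real.log 2)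

variable {p c C₀ A L : ℝ}

theorem goodLambdaEps_sq (hc : 0 < c) (hL : 0 ≤ L) : goodLambdaEps c L ^ 2 = c / (L + 4 * c) :=
  Real.sq_sqrt (by positivity)

theorem goodLambdaEps_pos (hc : 0 < c) (hL : 0 ≤ L) : 0 < goodLambdaEps c L :=
  Real.sqrt_pos.mpr (by positivity)

theorem goodLambdaEps_lt_half (hc : 0 < c) (hL : 0 < L) : goodLambdaEps c L < 1 / 2 := by
  rw [goodLambdaEps, Real.sqrt_lt' one_half_pos, div_lt_iff₀ (by positivity)]
  linarith

theorem div_goodLambdaEps_sq (hc : 0 < c) (hL : 0 ≤ L) :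
    c / goodLambdaEps c L ^ 2 = L + 4 * c := by
  rw [goodLambdaEps_sq hc hL, div_div_cancel₀ hc.ne']

theorem natCast_mul_exp_neg_div_goodLambdaEps_sq_le_one (hc : 0 < c) (N : ℕ) :
    N * Real.exp (-c / goodLambdaEps c (Real.log (N + 1)) ^ 2) ≤ 1 := by
  have hN : (0 : ℝ) < N + 1 := by positivity
  have hL : 0 ≤ Real.log (N + 1) := Real.log_nonneg (by linarith [N.cast_nonneg (α := ℝ)])
  calc N * Real.exp (-c / goodLambdaEps c (Real.log (N + 1)) ^ 2)
      ≤ N * Real.exp (-Real.log (N + 1)) := by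
        rw [neg_div, div_goodLambdaEps_sq hc hL]
        gcongr
        linarith
    _ ≤ 1 := by
        rw [Real.exp_neg, Real.exp_log hN, ← div_eq_mul_inv, div_le_one hN]
        linarith

theorem inv_goodLambdaEps_sq_le (hc : 0 < c) (hL : Real.log 2 ≤ L) :
    (goodLambdaEps c L)⁻¹ ^ 2 ≤ (1 / c + 4 / Real.log 2) * L := by
  have hlog2 := Real.log_pos one_lt_two
  have hL0 : 0 ≤ L := hlog2.le.trans hL
  rw [inv_pow, goodLambdaEps_sq hc hL0, inv_div, add_div, mul_div_cancel_right₀ _ hc.ne', add_mul,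
    div_mul_eq_mul_div, one_mul]
  gcongr
  rw [div_mul_eq_mul_div, le_div_iff₀ hlog2]
  linarith

theorem goodLambdaConst_pos (hc : 0 < c) (hC₀ : 0 < C₀) (hA : 0 < A) :
    0 < goodLambdaConst p c C₀ A := by
  have := Real.log_pos one_lt_two
  unfold goodLambdaConst
  positivity

theorem goodLambdaConst_rpow (hp : 0 < p) (hc : 0 < c) (hC₀ : 0 < C₀) (hA : 0 < A) :
    goodLambdaConst p c C₀ A ^ p =
      (C₀ * 2 ^ p + (2 * A) ^ p) * (1 / c + 4 / Real.log 2) ^ (p / 2) := by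
  have := Real.log_pos one_lt_two
  rw [goodLambdaConst, Real.mul_rpow (by positivity) (Real.sqrt_nonneg _),
    ← Real.rpow_mul (by positivity), one_div_mul_cancel hp.ne', Real.rpow_one,
    Real.sqrt_eq_rpow, ← Real.rpow_mul (by positivity), one_div_mul_eq_div]

theorem goodLambda_constant_bound (hp : 0 < p) (hc : 0 < c) (hC₀ : 0 < C₀)
    (hA : 0 < A) {N : ℕ} (hN : 0 < N) :
    N * (C₀ * Real.exp (-c / goodLambdaEps c (Real.log (N + 1)) ^ 2)) * 2 ^ p +
        (2 * A / goodLambdaEps c (Real.log (N + 1))) ^ p ≤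
      goodLambdaConst p c C₀ A ^ p * Real.log (N + 1) ^ (p / 2) := by
  set L := Real.log (N + 1)
  set ε := goodLambdaEps c L
  set M := 1 / c + 4 / Real.log 2
  have hlog2 := Real.log_pos one_lt_two
  have hL : Real.log 2 ≤ L :=
    Real.log_le_log two_pos (by linarith [(Nat.one_le_cast (α := ℝ)).mpr hN])
  have hL0 : 0 ≤ L := hlog2.le.trans hL
  have hε := goodLambdaEps_pos hc hL0
  have hM : 0 < M := by positivity
  have hεM : ε⁻¹ ^ 2 ≤ M * L := inv_goodLambdaEps_sq_le hc hL
  have hML : 1 ≤ M * L := le_trans (one_le_pow₀ ((one_le_inv₀ hε).mpr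
    (by linarith [goodLambdaEps_lt_half hc (hlog2.trans_le hL)]))) hεM
  have hfirst : N * (C₀ * Real.exp (-c / ε ^ 2)) * 2 ^ p ≤ C₀ * 2 ^ p * (M * L) ^ (p / 2) := by
    have := natCast_mul_exp_neg_div_goodLambdaEps_sq_le_one hc N
    calc N * (C₀ * Real.exp (-c / ε ^ 2)) * 2 ^ p
        = C₀ * 2 ^ p * (N * Real.exp (-c / ε ^ 2)) := by ring
      _ ≤ C₀ * 2 ^ p * (M * L) ^ (p / 2) := by
        gcongr
        exact this.trans (Real.one_le_rpow hML (by positivity))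
  have hsecond : (2 * A / ε) ^ p ≤ (2 * A) ^ p * (M * L) ^ (p / 2) := by
    calc (2 * A / ε) ^ p = (2 * A) ^ p * (ε⁻¹ ^ 2) ^ (p / 2) := by
          rw [div_eq_mul_inv, Real.mul_rpow (by positivity) (by positivity), ← Real.rpow_two,
            ← Real.rpow_mul (by positivity), mul_div_cancel₀ p two_ne_zero]
      _ ≤ (2 * A) ^ p * (M * L) ^ (p / 2) := by
          gcongr
  rw [goodLambdaConst_rpow hp hc hC₀ hA, mul_assoc _ (M ^ _), ← Real.mul_rpow hM.le hL0]
  linarith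

end Constants

/-- Abstract good-λ argument: a sub-Gaussian good-λ inequality for each pair
`(u_i, s_i)` relative to `v_i`, pointwise control `s_i ≤ A g`, and `L^p` bounds on the `v_i`
and on `g`, give the `L^p` bound `∫ (max_i u_i)^p ≤ C^p (log(N+1))^{p/2} B^p`, with `C`
depending only on `p, c, C₀, A`. -/
theorem stmt5 (p : ℝ) (hp : 0 < p) (c C₀ A : ℝ) (hc : 0 < c) (hC₀ : 0 < C₀) (hA : 0 < A) :
    ∃ C : ℝ, 0 < C ∧
      ∀ {X : Type*} [MeasurableSpace X] (μ : Measure X) (N : ℕ), 0 < N →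
        ∀ (u s v : Fin N → X → ℝ) (g : X → ℝ) (B : ℝ), 0 < B →
          (∀ i, Measurable (u i)) → (∀ i, Measurable (s i)) →
          (∀ i, Measurable (v i)) → Measurable g →
          (∀ i x, 0 ≤ u i x) → (∀ i x, 0 ≤ s i x) →
          (∀ i x, 0 ≤ v i x) → (∀ x, 0 ≤ g x) →
          (∀ (i : Fin N) (lam ε : ℝ), 0 < lam → 0 < ε → ε < 1 / 2 →
            μ ({x | 2 * lam < u i x} ∩ {x | s i x ≤ ε * lam}) ≤
              ENNReal.ofReal (C₀ * Real.exp (-c / ε ^ 2)) * μ {x | lam < v i x}) →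
          (∀ i x, s i x ≤ A * g x) →
          (∀ i, ∫⁻ x, ENNReal.ofReal (v i x) ^ p ∂μ ≤ ENNReal.ofReal (B ^ p)) →
          (∫⁻ x, ENNReal.ofReal (g x) ^ p ∂μ ≤ ENNReal.ofReal (B ^ p)) →
          ∫⁻ x, ENNReal.ofReal (⨆ i, u i x) ^ p ∂μ ≤
            ENNReal.ofReal (C ^ p * Real.log (N + 1) ^ (p / 2) * B ^ p) := by
  refine ⟨goodLambdaConst p c C₀ A, goodLambdaConst_pos hc hC₀ hA, ?_⟩
  intro X _ μ N hN u s v g B _ hu _ hv hg hu0 _ hv0 hg0 hgood hsg hvB hgB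
  have : Nonempty (Fin N) := ⟨⟨0, hN⟩⟩
  have hL : 0 < Real.log (N + 1) := Real.log_pos (by simpa using hN)
  set ε := goodLambdaEps c (Real.log (N + 1))
  have hε := goodLambdaEps_pos hc hL.le
  calc ∫⁻ x, ENNReal.ofReal (⨆ i, u i x) ^ p ∂μ
      ≤ ∑ i, ENNReal.ofReal (C₀ * Real.exp (-c / ε ^ 2)) *
            (ENNReal.ofReal 2 ^ p * ∫⁻ x, ENNReal.ofReal (v i x) ^ p ∂μ) +
          ENNReal.ofReal (2 * A / ε) ^ p * ∫⁻ x, ENNReal.ofReal (g x) ^ p ∂μ :=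
        lintegral_iSup_rpow_le_of_goodLambda hp hA.le hε hu hv hg hu0 hv0 hg0
          (fun i lam hlam => hgood i lam ε hlam hε (goodLambdaEps_lt_half hc hL)) hsg
    _ ≤ ∑ _i : Fin N, ENNReal.ofReal (C₀ * Real.exp (-c / ε ^ 2)) *
            (ENNReal.ofReal 2 ^ p * ENNReal.ofReal (B ^ p)) +
          ENNReal.ofReal (2 * A / ε) ^ p * ENNReal.ofReal (B ^ p) := by
        gcongr with i
        exact hvB i
    _ = ENNReal.ofReal ((N * (C₀ * Real.exp (-c / ε ^ 2)) * 2 ^ p + (2 * A / ε) ^ p) * B ^ p) := by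
        rw [Finset.sum_const, Finset.card_univ, Fintype.card_fin, nsmul_eq_mul,
          ENNReal.ofReal_rpow_of_nonneg zero_le_two hp.le,
          ENNReal.ofReal_rpow_of_nonneg (by positivity) hp.le, ← ENNReal.ofReal_natCast,
          ← ENNReal.ofReal_mul (by positivity), ← ENNReal.ofReal_mul (by positivity),
          ← ENNReal.ofReal_mul (by positivity), ← ENNReal.ofReal_mul (by positivity),
          ← ENNReal.ofReal_add (by positivity) (by positivity)]
        congr 1
        ring
    _ ≤ _ := by
        gcongr
        exact goodLambda_constant_bound hp hc hC₀ hA hN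
end
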